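/- Let r, g ∈ O_K be nonzero elements and set 𝔞 = (r) + (g). For a nonzero prime ideal p and a nonzero y ∈ O_K, let v_p(y) be the largest t ≥ 0 with y ∈ p^t, and for a nonzero ideal c let v_p(c) be the largest t ≥ 0 with c ⊆ p^t. Let x ∈ O_K be such that for every prime ideal p containing 𝔞: x ∈ p if v_p(r) = v_p(g), and x ∉ p if v_p(r) ≠ v_p(g). Then for every prime ideal p containing 𝔞 one has r + xg ∈ p^{v_p(𝔞)} and r + xg ∉ p^{v_p(𝔞)+1} (in particular v_p(r + xg) = v_p(𝔞)). -/

import Mathlib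

/-! Since `p` is prime in the monoid of ideals, `v_p` is the multiplicity of `p`, so
`v_p(𝔞) = min (v_p(r), v_p(g))`, and `v_p(x g) = v_p(g)` when `x ∉ p`. In each of the cases
`v_p(r) < v_p(g)`, `v_p(r) = v_p(g)`, `v_p(r) > v_p(g)` the condition on `x` makes one summand of
`r + x g` have valuation exactly `v_p(𝔞)` and the other one a strictly larger valuation. -/

open NumberField

/-- `v_p(y)`: the largest `t ≥ 0` with `y ∈ p^t` (junk value via `sSup` otherwise). -/
noncomputable def pvalElem {K : Type*} [Field K] [NumberField K]
    (p : Ideal (𝓞 K)) (y : 𝓞 K) : ℕ :=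
  sSup {t : ℕ | y ∈ p ^ t}

/-- `v_p(c)`: the largest `t ≥ 0` with `c ⊆ p^t` (junk value via `sSup` otherwise). -/
noncomputable def pvalIdeal {K : Type*} [Field K] [NumberField K]
    (p c : Ideal (𝓞 K)) : ℕ :=
  sSup {t : ℕ | c ≤ p ^ t}

theorem Ideal.add_mem_pow_and_not_mem_pow_succ {R : Type*} [CommRing R] {I : Ideal R} {n : ℕ}
    {u w : R} (hu : u ∈ I ^ n) (hu' : u ∉ I ^ (n + 1)) (hw : w ∈ I ^ (n + 1)) :
    u + w ∈ I ^ n ∧ u + w ∉ I ^ (n + 1) :=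
  ⟨add_mem hu (Ideal.pow_le_pow_right n.le_succ hw),
    fun h => hu' (by simpa using sub_mem h hw)⟩

section Valuation

variable {K : Type*} [Field K] [NumberField K] {p : Ideal (𝓞 K)}

theorem pvalIdeal_eq_multiplicity (hp : Prime p) {c : Ideal (𝓞 K)} (hc : c ≠ ⊥) :
    pvalIdeal p c = multiplicity p c := by
  have hfin : FiniteMultiplicity p c := .of_prime_left hp hc
  have hset : {t : ℕ | c ≤ p ^ t} = Set.Iic (multiplicity p c) := by
    ext t
    simp only [Set.mem_ofPred_eq, Set.mem_Iic, ← Ideal.dvd_iff_le,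
      hfin.pow_dvd_iff_le_multiplicity]
  rw [pvalIdeal, hset, csSup_Iic]

theorem le_pow_iff_le_pvalIdeal (hp : Prime p) {c : Ideal (𝓞 K)} (hc : c ≠ ⊥) (t : ℕ) :
    c ≤ p ^ t ↔ t ≤ pvalIdeal p c := by
  rw [pvalIdeal_eq_multiplicity hp hc, ← Ideal.dvd_iff_le,
    (FiniteMultiplicity.of_prime_left hp hc).pow_dvd_iff_le_multiplicity]

theorem pvalElem_eq_pvalIdeal_span (p : Ideal (𝓞 K)) (y : 𝓞 K) :
    pvalElem p y = pvalIdeal p (Ideal.span {y}) := by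
  simp only [pvalElem, pvalIdeal, Ideal.span_singleton_le_iff_mem]

theorem mem_pow_iff_le_pvalElem (hp : Prime p) {y : 𝓞 K} (hy : y ≠ 0) (t : ℕ) :
    y ∈ p ^ t ↔ t ≤ pvalElem p y := by
  rw [pvalElem_eq_pvalIdeal_span, ← le_pow_iff_le_pvalIdeal hp (by simpa using hy),
    Ideal.span_singleton_le_iff_mem]

theorem mem_pow_pvalElem (hp : Prime p) {y : 𝓞 K} (hy : y ≠ 0) : y ∈ p ^ pvalElem p y :=
  (mem_pow_iff_le_pvalElem hp hy _).mpr le_rfl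

theorem not_mem_pow_pvalElem_succ (hp : Prime p) {y : 𝓞 K} (hy : y ≠ 0) :
    y ∉ p ^ (pvalElem p y + 1) :=
  fun h => (pvalElem p y).not_succ_le_self ((mem_pow_iff_le_pvalElem hp hy _).mp h)

theorem pvalIdeal_sup (hp : Prime p) {I J : Ideal (𝓞 K)} (hI : I ≠ ⊥) (hJ : J ≠ ⊥) :
    pvalIdeal p (I ⊔ J) = min (pvalIdeal p I) (pvalIdeal p J) := by
  have hIJ : I ⊔ J ≠ ⊥ := fun h => hI (eq_bot_iff.mpr (h ▸ le_sup_left))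
  refine eq_of_forall_le_iff fun t => ?_
  rw [← le_pow_iff_le_pvalIdeal hp hIJ, le_min_iff, ← le_pow_iff_le_pvalIdeal hp hI,
    ← le_pow_iff_le_pvalIdeal hp hJ, sup_le_iff]

theorem pvalIdeal_span_sup_span (hp : Prime p) {r g : 𝓞 K} (hr : r ≠ 0) (hg : g ≠ 0) :
    pvalIdeal p (Ideal.span {r} ⊔ Ideal.span {g}) = min (pvalElem p r) (pvalElem p g) := by
  rw [pvalIdeal_sup hp (by simpa using hr) (by simpa using hg), pvalElem_eq_pvalIdeal_span,
    pvalElem_eq_pvalIdeal_span]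

end Valuation

/-- **Lemma.** If `x` lies in every prime `p ⊇ 𝔞 = (r) + (g)` with `v_p(r) = v_p(g)` and
avoids every prime `p ⊇ 𝔞` with `v_p(r) ≠ v_p(g)`, then `v_p(r + x·g) = v_p(𝔞)` for every
prime `p ⊇ 𝔞`. -/
theorem valuation_of_combination
    (K : Type*) [Field K] [NumberField K]
    (r g : 𝓞 K) (hr : r ≠ 0) (hg : g ≠ 0)
    (x : 𝓞 K)
    (hx : ∀ p : Ideal (𝓞 K), p ≠ ⊥ → p.IsPrime →
      Ideal.span {r} ⊔ Ideal.span {g} ≤ p →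
      ((pvalElem p r = pvalElem p g → x ∈ p) ∧ (pvalElem p r ≠ pvalElem p g → x ∉ p))) :
    ∀ p : Ideal (𝓞 K), p ≠ ⊥ → p.IsPrime →
      Ideal.span {r} ⊔ Ideal.span {g} ≤ p →
      r + x * g ∈ p ^ (pvalIdeal p (Ideal.span {r} ⊔ Ideal.span {g})) ∧
      r + x * g ∉ p ^ (pvalIdeal p (Ideal.span {r} ⊔ Ideal.span {g}) + 1) := by
  intro p hp0 hpp hle
  have hp : Prime p := Ideal.prime_of_isPrime hp0 hpp
  obtain ⟨hx_mem, hx_not_mem⟩ := hx p hp0 hpp hle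
  have hrv := mem_pow_pvalElem hp hr
  have hgv := mem_pow_pvalElem hp hg
  rw [pvalIdeal_span_sup_span hp hr hg]
  rcases lt_trichotomy (pvalElem p r) (pvalElem p g) with hlt | heq | hgt
  · rw [min_eq_left hlt.le]
    exact Ideal.add_mem_pow_and_not_mem_pow_succ hrv (not_mem_pow_pvalElem_succ hp hr)
      (Ideal.mul_mem_left _ x (Ideal.pow_le_pow_right hlt hgv))
  · rw [heq, min_self]
    refine Ideal.add_mem_pow_and_not_mem_pow_succ (heq ▸ hrv)
      (heq ▸ not_mem_pow_pvalElem_succ hp hr) ?_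
    rw [pow_succ']
    exact Ideal.mul_mem_mul (hx_mem heq) hgv
  · rw [min_eq_right hgt.le, add_comm]
    have hxg : x * g ∉ p ^ (pvalElem p g + 1) := fun h =>
      not_mem_pow_pvalElem_succ hp hg ((Ideal.IsPrime.mul_mem_pow p h).resolve_left (hx_not_mem hgt.ne'))
    exact Ideal.add_mem_pow_and_not_mem_pow_succ (Ideal.mul_mem_left _ x hgv) hxg
      (Ideal.pow_le_pow_right hgt hrv)
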